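/- If T is a tree, then the clique number of L(T)^2 equals max over edges {x,y} of T of d(x) + d(y) - 1, where d denotes vertex degree in T. Consequently the strong chromatic index of a tree T equals this maximum. -/

import Mathlib

/-!
Root `T` at a vertex `r` and let the depth of an edge be the distance from `r` to its farther
endpoint. If `e = wv` with `w` the parent of `v`, then every edge within distance two of `e` in
`L(T)` that is no deeper than `e` meets `w` or the parent of `w` (or `v`, when `w = r`). Hence a
clique of `L(T)²`, viewed from its deepest edge, consists of edges at two adjacent vertices `x`,
`y`, of which there are `d(x) + d(y) - 1`; conversely the edges at `x` or `y` always form a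
clique. Colouring greedily by increasing depth, each edge has fewer than `d(x) + d(y) - 1`
already coloured neighbours, so `max (d(x) + d(y) - 1)` colours suffice.
-/

open SimpleGraph

/-- The square of a graph: same vertices, adjacency iff distance 1 or 2. -/
def SimpleGraph.square {V : Type*} (G : SimpleGraph V) : SimpleGraph V where
  Adj u v := u ≠ v ∧ (G.Adj u v ∨ ∃ w, G.Adj u w ∧ G.Adj w v)
  symm := by
    constructor
    rintro u v ⟨h, h' | ⟨w, hw1, hw2⟩⟩
    · exact ⟨h.symm, Or.inl h'.symm⟩
    · exact ⟨h.symm, Or.inr ⟨w, hw2.symm, hw1.symm⟩⟩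
  loopless := ⟨fun v h => h.1 rfl⟩

/-- `G` has an induced cycle of length `n`. -/
def SimpleGraph.HasInducedCycle {V : Type*} (G : SimpleGraph V) (n : ℕ) : Prop :=
  Nonempty (cycleGraph n ↪g G)

/-- A graph is chordal if it has no induced cycle of length at least 4. -/
def SimpleGraph.Chordal {V : Type*} (G : SimpleGraph V) : Prop :=
  ∀ n, 4 ≤ n → ¬ G.HasInducedCycle n

open Finset

namespace SimpleGraph

theorem colorable_of_card_adj_key_le_lt {α β : Type*} [Fintype α] [DecidableEq α]
    [LinearOrder β] (G : SimpleGraph α) [DecidableRel G.Adj] (key : α → β) {n : ℕ}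
    (h : ∀ v, #{u | G.Adj u v ∧ key u ≤ key v} < n) : G.Colorable n := by
  suffices ∀ s : Finset α, ∃ c : α → Fin n, ∀ u ∈ s, ∀ v ∈ s, G.Adj u v → c u ≠ c v by
    obtain ⟨c, hc⟩ := this univ
    exact ⟨Coloring.mk c fun huv => hc _ (mem_univ _) _ (mem_univ _) huv⟩
  intro s
  induction s using Finset.induction_on_max_value key with
  | empty => exact ⟨fun v => ⟨0, by have := h v; omega⟩, by simp⟩
  | insert a s ha hmax ih =>
    obtain ⟨c, hc⟩ := ih
    have hused : #((s.filter (G.Adj · a)).image c) < #(univ : Finset (Fin n)) := by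
      rw [card_univ, Fintype.card_fin]
      refine card_image_le.trans_lt ((card_le_card fun u hu => ?_).trans_lt (h a))
      simp only [mem_filter, mem_univ, true_and] at hu ⊢
      exact ⟨hu.2, hmax u hu.1⟩
    obtain ⟨k, -, hk⟩ := exists_mem_notMem_of_card_lt_card hused
    refine ⟨Function.update c a k, ?_⟩
    have hfresh : ∀ u ∈ s, G.Adj u a → c u ≠ k := fun u hu hua hck =>
      hk (mem_image.mpr ⟨u, mem_filter.mpr ⟨hu, hua⟩, hck⟩)
    intro u hu v hv huv
    rw [mem_insert] at hu hv
    rcases hu with rfl | hu <;> rcases hv with rfl | hv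
    · exact absurd huv (G.loopless.irrefl _)
    · rw [Function.update_self, Function.update_of_ne (ne_of_mem_of_not_mem hv ha)]
      exact (hfresh v hv huv.symm).symm
    · rw [Function.update_self, Function.update_of_ne (ne_of_mem_of_not_mem hu ha)]
      exact hfresh u hu huv
    · rw [Function.update_of_ne (ne_of_mem_of_not_mem hu ha),
        Function.update_of_ne (ne_of_mem_of_not_mem hv ha)]
      exact hc u hu v hv huv

variable {V : Type*} {T : SimpleGraph V}

theorem Walk.dist_le_length_of_mem_support {G : SimpleGraph V} {u v w : V} (p : G.Walk u v)
    (hw : w ∈ p.support) : G.dist u w ≤ p.length := by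
  classical
  exact (dist_le _).trans (p.length_takeUntil_le_length hw)

noncomputable def edgeDepth (T : SimpleGraph V) (r : V) (e : Sym2 V) : ℕ :=
  Sym2.lift ⟨fun x y => max (T.dist r x) (T.dist r y), fun _ _ => max_comm _ _⟩ e

@[simp] lemma edgeDepth_mk (r x y : V) :
    edgeDepth T r s(x, y) = max (T.dist r x) (T.dist r y) := rfl

lemma dist_le_edgeDepth (r : V) {e : Sym2 V} {x : V} (hx : x ∈ e) :
    T.dist r x ≤ edgeDepth T r e := by
  induction e using Sym2.ind with
  | _ a b => rcases Sym2.mem_iff.mp hx with rfl | rfl <;> simp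

lemma exists_eq_or_adj_of_lineGraph_square_adj {e f : T.edgeSet}
    (h : T.lineGraph.square.Adj e f) :
    ∃ b ∈ (e : Sym2 V), ∃ x ∈ (f : Sym2 V), b = x ∨ T.Adj b x := by
  rcases h with ⟨-, hef | ⟨g, heg, hgf⟩⟩
  · obtain ⟨-, v, hve, hvf⟩ := lineGraph_adj_iff_exists.mp hef
    exact ⟨v, hve, v, hvf, .inl rfl⟩
  · obtain ⟨-, u, hue, hug⟩ := lineGraph_adj_iff_exists.mp heg
    obtain ⟨-, w, hwg, hwf⟩ := lineGraph_adj_iff_exists.mp hgf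
    by_cases huw : u = w
    · exact ⟨u, hue, w, hwf, .inl huw⟩
    · refine ⟨u, hue, w, hwf, .inr ?_⟩
      rw [← mem_edgeSet, ← (Sym2.mem_and_mem_iff huw).mp ⟨hug, hwg⟩]
      exact g.2

lemma lineGraph_square_adj_of_mem_of_mem {x y : V} (hxy : T.Adj x y) {e f : T.edgeSet}
    (hx : x ∈ (e : Sym2 V)) (hy : y ∈ (f : Sym2 V)) (hne : e ≠ f) :
    T.lineGraph.square.Adj e f := by
  refine ⟨hne, ?_⟩
  set g : T.edgeSet := ⟨s(x, y), hxy⟩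
  have hxg : x ∈ (g : Sym2 V) := Sym2.mem_mk_left x y
  have hyg : y ∈ (g : Sym2 V) := Sym2.mem_mk_right x y
  by_cases heg : e = g
  · exact .inl (lineGraph_adj_iff_exists.mpr ⟨hne, y, heg ▸ hyg, hy⟩)
  by_cases hfg : f = g
  · exact .inl (lineGraph_adj_iff_exists.mpr ⟨hne, x, hx, hfg ▸ hxg⟩)
  exact .inr ⟨g, lineGraph_adj_iff_exists.mpr ⟨heg, x, hx, hxg⟩,
    lineGraph_adj_iff_exists.mpr ⟨Ne.symm hfg, y, hyg, hy⟩⟩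

namespace IsTree

variable (r : V)

lemma dist_add_one_eq_of_adj_of_dist_le (hT : T.IsTree) {x y : V} (hxy : T.Adj x y)
    (h : T.dist r x ≤ T.dist r y) : T.dist r x + 1 = T.dist r y := by
  have := hT.dist_eq_dist_add_one_of_adj r hxy
  omega

lemma eq_of_adj_of_dist_add_one_eq (hT : T.IsTree) {x x' y : V} (hx : T.Adj x y)
    (hx' : T.Adj x' y) (hd : T.dist r x + 1 = T.dist r y)
    (hd' : T.dist r x' + 1 = T.dist r y) : x = x' := by
  have not_mem {z : V} (p : T.Walk r z) (hp : p.length = T.dist r z)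
      (hz : T.dist r z < T.dist r y) : y ∉ p.support := fun hy =>
    (p.dist_le_length_of_mem_support hy).not_gt (hp ▸ hz)
  obtain ⟨p, hp, hpl⟩ := hT.connected.exists_path_of_dist r x
  obtain ⟨q, hq, hql⟩ := hT.connected.exists_path_of_dist r x'
  have hP : (p.concat hx).IsPath := hp.concat (not_mem p hpl (by omega)) hx
  -- By acyclicity `x'` lies on the path `p.concat hx` from `r` to `y`, so it is its penultimate
  -- vertex `x`.
  have hx'P : x' ∈ (p.concat hx).support :=
    hT.isAcyclic.mem_support_of_ne_mem_support_of_adj_of_isPath hP hq hx'.symm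
      (not_mem q hql (by omega))
  simpa using (hT.isAcyclic.eq_penultimate_of_adj_end hP hx'.symm hx'P).symm

lemma exists_adj_dist_add_one_eq (hT : T.IsTree) {y : V} (hy : y ≠ r) :
    ∃ x, T.Adj x y ∧ T.dist r x + 1 = T.dist r y := by
  obtain ⟨p, -, hpl⟩ := hT.connected.exists_path_of_dist r y
  have hp : ¬p.Nil := fun h => hy h.eq.symm
  refine ⟨p.penultimate, p.adj_penultimate hp,
    hT.dist_add_one_eq_of_adj_of_dist_le r (p.adj_penultimate hp) ?_⟩
  have := dist_le p.dropLast
  have := p.length_dropLast_add_one hp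
  omega

lemma exists_eq_mk_of_mem_edgeSet (hT : T.IsTree) {e : Sym2 V} (he : e ∈ T.edgeSet) :
    ∃ w v, T.Adj w v ∧ T.dist r w + 1 = T.dist r v ∧ e = s(w, v) := by
  induction e using Sym2.ind with
  | _ x y =>
    rcases hT.dist_eq_dist_add_one_of_adj r he with h | h
    · exact ⟨y, x, he.symm, h.symm, Sym2.eq_swap⟩
    · exact ⟨x, y, he, h.symm, rfl⟩

lemma mem_of_edgeDepth_le (hT : T.IsTree) {e : Sym2 V} (he : e ∈ T.edgeSet) {a b : V}
    (hb : b ∈ e) (hdepth : edgeDepth T r e ≤ T.dist r b) (hab : T.Adj a b)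
    (hd : T.dist r a + 1 = T.dist r b) : a ∈ e := by
  obtain ⟨t, rfl⟩ := Sym2.mem_iff_exists.mp hb
  have hbt : T.Adj b t := he
  have ht : T.dist r t ≤ T.dist r b :=
    (dist_le_edgeDepth r (Sym2.mem_mk_right b t)).trans hdepth
  rw [hT.eq_of_adj_of_dist_add_one_eq r hab hbt.symm hd
    (hT.dist_add_one_eq_of_adj_of_dist_le r hbt.symm ht)]
  exact Sym2.mem_mk_right b t

lemma mem_or_parent_mem_of_lineGraph_square_adj (hT : T.IsTree) {w v : V} (hwv : T.Adj w v)
    (hd : T.dist r w + 1 = T.dist r v) {e h : T.edgeSet} (he : (e : Sym2 V) = s(w, v))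
    (hadj : T.lineGraph.square.Adj h e) (hdepth : edgeDepth T r h ≤ T.dist r v) :
    w ∈ (h : Sym2 V) ∨ ∃ z, T.Adj z w ∧ T.dist r z + 1 = T.dist r w ∧ z ∈ (h : Sym2 V) := by
  obtain ⟨b, hb, x, hx, hbx⟩ := exists_eq_or_adj_of_lineGraph_square_adj hadj
  have hbv : T.dist r b ≤ T.dist r v := (dist_le_edgeDepth r hb).trans hdepth
  rw [he, Sym2.mem_iff] at hx
  rcases hx with hx | hx <;> subst x <;> rcases hbx with rfl | hbx
  · exact .inl hb
  · rcases hT.dist_eq_dist_add_one_of_adj r hbx with hbw | hbw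
    · exact .inl (hT.mem_of_edgeDepth_le r h.2 hb (by omega) hbx.symm hbw.symm)
    · exact .inr ⟨b, hbx, hbw.symm, hb⟩
  · exact .inl (hT.mem_of_edgeDepth_le r h.2 hb hdepth hwv hd)
  · rcases hT.dist_eq_dist_add_one_of_adj r hbx with hvb | hvb
    · omega
    · rw [hT.eq_of_adj_of_dist_add_one_eq r hbx hwv hvb.symm hd] at hb
      exact .inl hb

lemma exists_adj_forall_lineGraph_square_adj_mem (hT : T.IsTree) (e : T.edgeSet) :
    ∃ x y, T.Adj x y ∧ (x ∈ (e : Sym2 V) ∨ y ∈ (e : Sym2 V)) ∧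
      ∀ h : T.edgeSet, T.lineGraph.square.Adj h e → edgeDepth T r h ≤ edgeDepth T r e →
        x ∈ (h : Sym2 V) ∨ y ∈ (h : Sym2 V) := by
  obtain ⟨w, v, hwv, hd, he⟩ := hT.exists_eq_mk_of_mem_edgeSet r e.2
  have hwe : w ∈ (e : Sym2 V) := he ▸ Sym2.mem_mk_left w v
  have hdepth : edgeDepth T r e = T.dist r v := by
    rw [he, edgeDepth_mk]
    omega
  have cover (h : T.edgeSet) (hadj : T.lineGraph.square.Adj h e)
      (hle : edgeDepth T r h ≤ edgeDepth T r e) :=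
    hT.mem_or_parent_mem_of_lineGraph_square_adj r hwv hd he hadj (hdepth ▸ hle)
  by_cases hw : w = r
  · refine ⟨w, v, hwv, .inl hwe, fun h hadj hle => ?_⟩
    rcases cover h hadj hle with hmem | ⟨z, -, hz, -⟩
    · exact .inl hmem
    · simp [hw] at hz
  · obtain ⟨z, hzw, hz⟩ := hT.exists_adj_dist_add_one_eq r hw
    refine ⟨z, w, hzw, .inr hwe, fun h hadj hle => ?_⟩
    rcases cover h hadj hle with hmem | ⟨z', hz'w, hz', hmem⟩
    · exact .inr hmem
    · exact .inl (hT.eq_of_adj_of_dist_add_one_eq r hz'w hzw hz' hz ▸ hmem)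

end IsTree

def edgesAt (T : SimpleGraph V) [Fintype T.edgeSet] [DecidableEq V] (x : V) :
    Finset T.edgeSet :=
  {e | x ∈ (e : Sym2 V)}

section EdgesAt

variable [Fintype V] [DecidableRel T.Adj] [DecidableEq V]

@[simp] lemma mem_edgesAt {x : V} {e : T.edgeSet} : e ∈ edgesAt T x ↔ x ∈ (e : Sym2 V) := by
  simp [edgesAt]

lemma card_edgesAt (x : V) : #(edgesAt T x) = T.degree x := by
  rw [← card_incidenceFinset_eq_degree, ← card_map (Function.Embedding.subtype _)]
  congr 1
  ext e
  simp [incidenceSet, and_comm]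

lemma card_edgesAt_union {x y : V} (hxy : T.Adj x y) :
    #(edgesAt T x ∪ edgesAt T y) = T.degree x + T.degree y - 1 := by
  have hinter : edgesAt T x ∩ edgesAt T y = {⟨s(x, y), hxy⟩} := by
    ext e
    simp only [mem_inter, mem_edgesAt, mem_singleton, ← Subtype.val_inj]
    exact Sym2.mem_and_mem_iff hxy.ne
  have := card_union_add_card_inter (edgesAt T x) (edgesAt T y)
  rw [hinter, card_singleton, card_edgesAt, card_edgesAt] at this
  omega

lemma isClique_edgesAt_union {x y : V} (hxy : T.Adj x y) :
    T.lineGraph.square.IsClique (↑(edgesAt T x ∪ edgesAt T y) : Set T.edgeSet) := by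
  have share {e f : T.edgeSet} {v : V} (he : v ∈ (e : Sym2 V)) (hf : v ∈ (f : Sym2 V))
      (hne : e ≠ f) : T.lineGraph.square.Adj e f :=
    ⟨hne, .inl (lineGraph_adj_iff_exists.mpr ⟨hne, v, he, hf⟩)⟩
  intro e he f hf hne
  simp only [coe_union, Set.mem_union, mem_coe, mem_edgesAt] at he hf
  rcases he with he | he <;> rcases hf with hf | hf
  · exact share he hf hne
  · exact lineGraph_square_adj_of_mem_of_mem hxy he hf hne
  · exact (lineGraph_square_adj_of_mem_of_mem hxy hf he hne.symm).symm
  · exact share he hf hne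

lemma IsTree.exists_adj_subset_edgesAt_union (hT : T.IsTree) {s : Finset T.edgeSet}
    (hs : T.lineGraph.square.IsClique (s : Set T.edgeSet)) (hne : s.Nonempty) :
    ∃ x y, T.Adj x y ∧ s ⊆ edgesAt T x ∪ edgesAt T y := by
  obtain ⟨r⟩ := hT.connected.nonempty
  obtain ⟨e, he, hdeepest⟩ := s.exists_max_image (fun h => edgeDepth T r h) hne
  obtain ⟨x, y, hxy, hex, hcover⟩ := hT.exists_adj_forall_lineGraph_square_adj_mem r e
  refine ⟨x, y, hxy, fun h hh => ?_⟩
  rw [mem_union, mem_edgesAt, mem_edgesAt]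
  obtain rfl | hne := eq_or_ne h e
  · exact hex
  · exact hcover h (hs hh he hne) (hdeepest h hh)

end EdgesAt

variable [Fintype V] [DecidableRel T.Adj]

lemma le_cliqueNum_lineGraph_square {x y : V} (hxy : T.Adj x y) :
    T.degree x + T.degree y - 1 ≤ T.lineGraph.square.cliqueNum := by
  classical
  rw [← card_edgesAt_union hxy]
  exact (isClique_edgesAt_union hxy).card_le_cliqueNum

lemma IsTree.cliqueNum_lineGraph_square_le (hT : T.IsTree) {M : ℕ}
    (hM : ∀ x y, T.Adj x y → T.degree x + T.degree y - 1 ≤ M) :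
    T.lineGraph.square.cliqueNum ≤ M := by
  classical
  obtain ⟨s, hs⟩ := T.lineGraph.square.exists_isNClique_cliqueNum
  rw [← hs.card_eq]
  obtain rfl | hne := s.eq_empty_or_nonempty
  · exact (card_empty).trans_le (Nat.zero_le M)
  obtain ⟨x, y, hxy, hsub⟩ := hT.exists_adj_subset_edgesAt_union hs.isClique hne
  calc #s ≤ #(edgesAt T x ∪ edgesAt T y) := card_le_card hsub
    _ = T.degree x + T.degree y - 1 := card_edgesAt_union hxy
    _ ≤ M := hM x y hxy

lemma IsTree.colorable_lineGraph_square (hT : T.IsTree) {M : ℕ}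
    (hM : ∀ x y, T.Adj x y → T.degree x + T.degree y - 1 ≤ M) :
    T.lineGraph.square.Colorable M := by
  classical
  obtain ⟨r⟩ := hT.connected.nonempty
  refine colorable_of_card_adj_key_le_lt _ (fun e : T.edgeSet => edgeDepth T r e) fun e => ?_
  obtain ⟨x, y, hxy, hex, hcover⟩ := hT.exists_adj_forall_lineGraph_square_adj_mem r e
  have hsub : ({h | T.lineGraph.square.Adj h e ∧ edgeDepth T r h ≤ edgeDepth T r e} :
      Finset T.edgeSet) ⊆ (edgesAt T x ∪ edgesAt T y).erase e := by
    intro h hh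
    rw [mem_filter] at hh
    rw [mem_erase, mem_union, mem_edgesAt, mem_edgesAt]
    exact ⟨hh.2.1.ne, hcover h hh.2.1 hh.2.2⟩
  have he : e ∈ edgesAt T x ∪ edgesAt T y := by
    rwa [mem_union, mem_edgesAt, mem_edgesAt]
  calc #{h | T.lineGraph.square.Adj h e ∧ edgeDepth T r h ≤ edgeDepth T r e}
      ≤ #((edgesAt T x ∪ edgesAt T y).erase e) := card_le_card hsub
    _ < #(edgesAt T x ∪ edgesAt T y) := card_erase_lt_of_mem he
    _ = T.degree x + T.degree y - 1 := card_edgesAt_union hxy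
    _ ≤ M := hM x y hxy

end SimpleGraph

/-- For a tree T, the clique number of $L(T)^2$ equals
$\max\{d(x)+d(y)-1 : xy ∈ E(T)\}$, and consequently the strong chromatic index of T
(the chromatic number of $L(T)^2$) equals this maximum as well. -/
theorem tree_strong_chromatic_index {V : Type*} [Fintype V]
    (T : SimpleGraph V) [DecidableRel T.Adj] (hT : T.IsTree) :
    (T.lineGraph.square).cliqueNum
        = sSup {m | ∃ x y, T.Adj x y ∧ m = T.degree x + T.degree y - 1} ∧
    (T.lineGraph.square).chromaticNumber
        = (sSup {m | ∃ x y, T.Adj x y ∧ m = T.degree x + T.degree y - 1} : ℕ) := by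
  set S := {m | ∃ x y, T.Adj x y ∧ m = T.degree x + T.degree y - 1}
  have hS : BddAbove S := by
    refine (Set.finite_range fun p : V × V => T.degree p.1 + T.degree p.2 - 1).subset ?_
      |>.bddAbove
    rintro _ ⟨x, y, -, rfl⟩
    exact ⟨(x, y), rfl⟩
  have hM : ∀ x y, T.Adj x y → T.degree x + T.degree y - 1 ≤ sSup S :=
    fun x y hxy => le_csSup hS ⟨x, y, hxy, rfl⟩
  have hω : T.lineGraph.square.cliqueNum = sSup S := by
    refine le_antisymm (hT.cliqueNum_lineGraph_square_le hM) (csSup_le' ?_)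
    rintro _ ⟨x, y, hxy, rfl⟩
    exact le_cliqueNum_lineGraph_square hxy
  refine ⟨hω, le_antisymm (hT.colorable_lineGraph_square hM).chromaticNumber_le ?_⟩
  exact hω ▸ cliqueNum_le_chromaticNumber
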